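/- arXiv:2406.05117 — 5 statements merged into one kernel-verified Lean document; each statement's English description precedes it below -/
import Mathlib

section
/- On the space H_p, the expression ‖x‖_{H_p} = Σ_{k,l=1}^∞ kl|Δx_{k,l}| + lim_{N→∞} (sup_{k,l ≥ N} |x_{k,l}|) is a well-defined seminorm (the limit exists and is finite for every x ∈ H_p), and H_p is complete with respect to this seminorm: every sequence in H_p that is Cauchy for ‖·‖_{H_p} converges in the seminorm to an element of H_p. -/
open Filter Topology

noncomputable section

/-- The set `Ω` of all complex double sequences (0-indexed: entry `x k l`
corresponds to the paper's `x_{k+1,l+1}`). -/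
abbrev DSeq : Type := ℕ → ℕ → ℂ

/-- The double (forward) difference operator `Δ`. -/
def dDiff (x : DSeq) (k l : ℕ) : ℂ :=
  x k l - x (k + 1) l - x k (l + 1) + x (k + 1) (l + 1)

/-- Pringsheim (p-) convergence of a double sequence to `L`. -/
def PConv (x : DSeq) (L : ℂ) : Prop :=
  ∀ ε > (0 : ℝ), ∃ N : ℕ, ∀ k ≥ N, ∀ l ≥ N, ‖x k l - L‖ < ε

/-- Boundedness of a double sequence. -/
def DBounded (x : DSeq) : Prop :=
  ∃ M : ℝ, ∀ k l : ℕ, ‖x k l‖ ≤ M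

/-- bp-convergence: bounded Pringsheim convergence. -/
def BPConv (x : DSeq) (L : ℂ) : Prop := PConv x L ∧ DBounded x

/-- r-convergence (regular convergence). -/
def RConv (x : DSeq) (L : ℂ) : Prop :=
  PConv x L ∧ (∀ k : ℕ, ∃ c : ℂ, Tendsto (fun l => x k l) atTop (nhds c)) ∧
    (∀ l : ℕ, ∃ c : ℂ, Tendsto (fun k => x k l) atTop (nhds c))

/-- The three convergence notions ϑ ∈ {p, bp, r}. -/
inductive Theta | p | bp | r

/-- ϑ-convergence. -/
def ThConv : Theta → DSeq → ℂ → Prop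
  | Theta.p => PConv
  | Theta.bp => BPConv
  | Theta.r => RConv

/-- `Σ_{k,l} kl |Δx_{k,l}| < ∞` (0-indexed, so the weight is `(k+1)(l+1)`). -/
def HahnSummable (x : DSeq) : Prop :=
  Summable (fun kl : ℕ × ℕ =>
    (((kl.1 + 1) * (kl.2 + 1) : ℕ) : ℝ) * ‖dDiff x kl.1 kl.2‖)

/-- The Hahn double sequence space `H_ϑ`. -/
def Hahn (θ : Theta) : Set DSeq := {x | HahnSummable x ∧ ThConv θ x 0}

/-- `‖x‖_H = Σ_{k,l} kl |Δx_{k,l}|`. -/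
def hNorm (x : DSeq) : ℝ :=
  ∑' kl : ℕ × ℕ, (((kl.1 + 1) * (kl.2 + 1) : ℕ) : ℝ) * ‖dDiff x kl.1 kl.2‖

/-- Rectangular partial sums of the products `a_{k,l} x_{k,l}`. -/
def pSum (a x : DSeq) (m n : ℕ) : ℂ :=
  ∑ k ∈ Finset.range (m + 1), ∑ l ∈ Finset.range (n + 1), a k l * x k l

/-- Rectangular partial sums of `a`. -/
def rectSum (a : DSeq) (m n : ℕ) : ℂ :=
  ∑ k ∈ Finset.range (m + 1), ∑ l ∈ Finset.range (n + 1), a k l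

/-- The space `P_∞`: `sup_{m,n} (1/(mn)) |Σ_{k≤m,l≤n} a_{k,l}| < ∞`. -/
def Pinf (a : DSeq) : Prop :=
  ∃ C : ℝ, ∀ m n : ℕ,
    (1 / (((m : ℝ) + 1) * ((n : ℝ) + 1))) * ‖rectSum a m n‖ ≤ C

/-- `L_u`: absolutely summable double sequences. -/
def Lu : Set DSeq := {x | Summable (fun kl : ℕ × ℕ => ‖x kl.1 kl.2‖)}

/-- `M_u`: bounded double sequences. -/
def Mu : Set DSeq := {x | DBounded x}

/-- `C_bp`: bp-convergent double sequences. -/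
def Cbp : Set DSeq := {x | ∃ L : ℂ, BPConv x L}

/-- The integrated space `∫L_u = {x : Σ_{k,l} kl |x_{k,l}| < ∞}`. -/
def intLu : Set DSeq :=
  {x | Summable (fun kl : ℕ × ℕ =>
    (((kl.1 + 1) * (kl.2 + 1) : ℕ) : ℝ) * ‖x kl.1 kl.2‖)}

/-- `BV`: double sequences of bounded variation. -/
def BVset : Set DSeq :=
  {x | Summable (fun kl : ℕ × ℕ => ‖dDiff x kl.1 kl.2‖)}

/-- The rectangular section `x^{[m,n]}`. -/
def sect (x : DSeq) (m n : ℕ) : DSeq :=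
  fun k l => if k ≤ m ∧ l ≤ n then x k l else 0

/-- `sup_{k,l ≥ N} |x_{k,l}|` valued in `ℝ≥0∞`. -/
def supTail (x : DSeq) (N : ℕ) : ENNReal :=
  ⨆ k : ℕ, ⨆ l : ℕ, if N ≤ k ∧ N ≤ l then (‖x k l‖₊ : ENNReal) else 0

/-- The seminorm on `H_p`: `Σ kl|Δx| + lim_N sup_{k,l≥N} |x_{k,l}|`
(the limit written as a limsup, which agrees with the limit whenever it exists). -/
def hpSemi (x : DSeq) : ℝ :=
  hNorm x + (Filter.limsup (supTail x) atTop).toReal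

/-- The element `d^{(k,l)}` of the determining set. -/
def dkl (k l : ℕ) : DSeq :=
  fun i j => if i ≤ k ∧ j ≤ l then (1 / (((k : ℂ) + 1) * ((l : ℂ) + 1))) else 0

/-- Finitely supported double sequences (the set `φ`). -/
def FinSupp (x : DSeq) : Prop :=
  ∃ M : ℕ, ∀ k l : ℕ, (M ≤ k ∨ M ≤ l) → x k l = 0

/-- A 4D matrix `B` belongs to the class `(X, Y)`: for every `x ∈ X` the rectangular
partial sums of every row are bounded and Pringsheim convergent, and the resulting
double sequence of limits `Bx` belongs to `Y`. -/
def MatDom (B : ℕ → ℕ → DSeq) (X Y : Set DSeq) : Prop :=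
  ∀ x ∈ X, ∃ y ∈ Y, ∀ m n : ℕ, BPConv (pSum (B m n) x) (y m n)

/-- The associated 4D matrix `E`, `e_{m,n,k,l} = (1/(kl)) Σ_{i≤k,j≤l} a_{m,n,i,j}`. -/
def Emat (A : ℕ → ℕ → DSeq) (m n : ℕ) : DSeq :=
  fun k l => (1 / (((k : ℂ) + 1) * ((l : ℂ) + 1))) * rectSum (A m n) k l

/-- The difference `Δ^{11}_{mn}` applied to the first pair of indices of a 4D matrix. -/
def d11 (A : ℕ → ℕ → DSeq) (m n k l : ℕ) : ℂ :=
  A m n k l - A (m + 1) n k l - A m (n + 1) k l + A (m + 1) (n + 1) k l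

/-!
A double sequence that is Pringsheim convergent to `0` has `sup_{k,l ≥ N} |x_{k,l}|` tending
to `0`, so on `H_p` the seminorm is just `Σ kl|Δx_{k,l}|`, the `ℓ¹`-norm of the weighted
differences `kl Δx_{k,l}`. Completeness is therefore inherited from `ℓ¹(ℕ × ℕ)`: if `u_i` is
Cauchy, its weighted differences converge in `ℓ¹` to some `g`, and the tail sums
`x_{k,l} = Σ_{i ≥ k, j ≥ l} g_{i,j} / (ij)` form a Pringsheim null sequence with
`kl Δx_{k,l} = g_{k,l}`, which is the limit of `u_i`.
-/

lemma pConv_iff_tendsto {x : DSeq} {L : ℂ} :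
    PConv x L ↔ Tendsto (fun p : ℕ × ℕ => x p.1 p.2) atTop (𝓝 L) := by
  rw [← prod_atTop_atTop_eq, (atTop_basis.prod_self).tendsto_iff Metric.nhds_basis_ball]
  simp only [PConv, true_and, Set.mem_prod, Set.mem_Ici, and_imp, Prod.forall, Metric.mem_ball,
    dist_eq_norm]
  exact forall₂_congr fun _ _ => exists_congr fun _ =>
    ⟨fun h k l hk hl => h k hk l hl, fun h k hk l hl => h k l hk hl⟩

def weightedDiff : DSeq →ₗ[ℂ] (ℕ × ℕ → ℂ) where
  toFun x p := (((p.1 + 1) * (p.2 + 1) : ℕ) : ℂ) * dDiff x p.1 p.2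
  map_add' x y := by ext p; simp only [dDiff, Pi.add_apply]; ring
  map_smul' c x := by ext p; simp only [dDiff, Pi.smul_apply, smul_eq_mul, RingHom.id_apply]; ring

lemma norm_weightedDiff (x : DSeq) (p : ℕ × ℕ) :
    ‖weightedDiff x p‖ = (((p.1 + 1) * (p.2 + 1) : ℕ) : ℝ) * ‖dDiff x p.1 p.2‖ := by
  simp only [weightedDiff, LinearMap.coe_mk, AddHom.coe_mk, norm_mul, Complex.norm_natCast]

lemma hNorm_eq_tsum (x : DSeq) : hNorm x = ∑' p, ‖weightedDiff x p‖ := by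
  simp only [hNorm, norm_weightedDiff]

lemma hahnSummable_iff (x : DSeq) : HahnSummable x ↔ Summable (weightedDiff x) := by
  simp only [HahnSummable, ← norm_weightedDiff, summable_norm_iff]

def hahnP : Submodule ℂ DSeq where
  carrier := Hahn Theta.p
  add_mem' {x y} hx hy := by
    refine ⟨?_, ?_⟩
    · rw [hahnSummable_iff, map_add]
      exact ((hahnSummable_iff x).1 hx.1).add ((hahnSummable_iff y).1 hy.1)
    · exact pConv_iff_tendsto.2 <| by
        simpa using (pConv_iff_tendsto.1 hx.2).add (pConv_iff_tendsto.1 hy.2)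
  zero_mem' := by
    refine ⟨?_, ?_⟩
    · rw [hahnSummable_iff, map_zero]
      exact summable_zero
    · exact pConv_iff_tendsto.2 tendsto_const_nhds
  smul_mem' c x hx := by
    refine ⟨?_, ?_⟩
    · rw [hahnSummable_iff, map_smul]
      exact ((hahnSummable_iff x).1 hx.1).const_smul c
    · exact pConv_iff_tendsto.2 <| by simpa using (pConv_iff_tendsto.1 hx.2).const_mul c

lemma supTail_tendsto_zero {x : DSeq} (hx : PConv x 0) :
    Tendsto (supTail x) atTop (𝓝 0) := by
  rw [ENNReal.tendsto_atTop_zero]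
  intro ε hε
  obtain ⟨r, -, hr0, hrε⟩ := ENNReal.lt_iff_exists_real_btwn.1 hε
  obtain ⟨N, hN⟩ := hx r (ENNReal.ofReal_pos.1 hr0)
  refine ⟨N, fun n hn => le_trans (iSup₂_le fun k l => ?_) hrε.le⟩
  split_ifs with h
  · have hkl := hN k (hn.trans h.1) l (hn.trans h.2)
    rw [sub_zero] at hkl
    rw [← ENNReal.ofReal_coe_nnreal, coe_nnnorm]
    exact ENNReal.ofReal_le_ofReal hkl.le
  · exact zero_le

lemma hpSemi_eq_hNorm {x : DSeq} (hx : PConv x 0) : hpSemi x = hNorm x := by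
  simp [hpSemi, (supTail_tendsto_zero hx).limsup_eq]

lemma hpSemi_nonneg (x : DSeq) : 0 ≤ hpSemi x :=
  add_nonneg (tsum_nonneg fun _ => by positivity) ENNReal.toReal_nonneg

lemma hNorm_smul (c : ℂ) (x : DSeq) : hNorm (c • x) = ‖c‖ * hNorm x := by
  simp only [hNorm_eq_tsum, map_smul, Pi.smul_apply, smul_eq_mul, norm_mul, tsum_mul_left]

lemma hNorm_add_le {x y : DSeq} (hx : HahnSummable x) (hy : HahnSummable y) :
    hNorm (x + y) ≤ hNorm x + hNorm y := by
  rw [hahnSummable_iff, ← summable_norm_iff] at hx hy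
  have hle (p : ℕ × ℕ) :
      ‖weightedDiff (x + y) p‖ ≤ ‖weightedDiff x p‖ + ‖weightedDiff y p‖ := by
    rw [map_add]; exact norm_add_le _ _
  rw [hNorm_eq_tsum, hNorm_eq_tsum, hNorm_eq_tsum, ← hx.tsum_add hy]
  exact ((hx.add hy).of_nonneg_of_le (fun _ => norm_nonneg _) hle).tsum_le_tsum hle (hx.add hy)

def tailSum (a : ℕ × ℕ → ℂ) : DSeq := fun k l => ∑' p, (Set.Ici (k, l)).indicator a p

lemma dDiff_tailSum {a : ℕ × ℕ → ℂ} (ha : Summable a) (k l : ℕ) :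
    dDiff (tailSum a) k l = a (k, l) := by
  have hs : ∀ q : ℕ × ℕ, Summable ((Set.Ici q).indicator a) := fun q => ha.indicator _
  have hcorner : (Set.Ici (k, l)).indicator a - (Set.Ici (k + 1, l)).indicator a
      - (Set.Ici (k, l + 1)).indicator a + (Set.Ici (k + 1, l + 1)).indicator a
      = Pi.single (k, l) (a (k, l)) := by
    ext ⟨i, j⟩
    simp only [Pi.add_apply, Pi.sub_apply, Set.indicator_apply, Set.mem_Ici, Prod.mk_le_mk,
      Pi.single_apply, Prod.mk.injEq]
    split_ifs <;> first | ring1 | omega | (obtain ⟨rfl, rfl⟩ := ‹i = k ∧ j = l›; ring1)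
  simp only [dDiff, tailSum]
  rw [← (hs _).tsum_sub (hs _), ← ((hs _).sub (hs _)).tsum_sub (hs _),
    ← (((hs _).sub (hs _)).sub (hs _)).tsum_add (hs _)]
  exact (congrArg tsum hcorner).trans (tsum_pi_single _ _)

lemma tendsto_tailSum {a : ℕ × ℕ → ℂ} (ha : Summable (‖a ·‖)) :
    Tendsto (fun p : ℕ × ℕ => tailSum a p.1 p.2) atTop (𝓝 0) := by
  have := tendsto_tsum_of_dominated_convergence (𝓕 := atTop) ha
    (f := fun (q p : ℕ × ℕ) => (Set.Ici q).indicator a p) (g := 0) (fun p => ?_) ?_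
  · simpa [tailSum] using this
  · refine tendsto_const_nhds.congr' ?_
    filter_upwards [eventually_gt_atTop p] with q hq
    exact (Set.indicator_of_notMem (not_le_of_gt hq) a).symm
  · exact Eventually.of_forall fun q p => norm_indicator_le_norm_self _ _

lemma exists_summable_tendsto_tsum_norm_sub {ι E : Type*} [NormedAddCommGroup E]
    [CompleteSpace E] {f : ℕ → ι → E} (hf : ∀ i, Summable (‖f i ·‖))
    (hc : ∀ ε > (0 : ℝ), ∃ N, ∀ i ≥ N, ∀ j ≥ N, ∑' p, ‖f i p - f j p‖ < ε) :
    ∃ g : ι → E, Summable (‖g ·‖) ∧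
      Tendsto (fun i => ∑' p, ‖f i p - g p‖) atTop (𝓝 0) := by
  have hnorm (F G : lp (fun _ : ι => E) 1) : ‖F - G‖ = ∑' p, ‖F p - G p‖ := by
    simp [lp.norm_eq_tsum_rpow (p := 1) (by norm_num)]
  let F (i : ℕ) : lp (fun _ : ι => E) 1 := ⟨f i, memℓp_gen (by simpa using hf i)⟩
  have hF : CauchySeq F := Metric.cauchySeq_iff.2 ?_
  · obtain ⟨G, hG⟩ := cauchySeq_tendsto_of_complete hF
    refine ⟨G, by simpa using (lp.memℓp G).summable (by norm_num), ?_⟩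
    simpa [hnorm, F] using (tendsto_iff_norm_sub_tendsto_zero.1 hG)
  · simpa [dist_eq_norm, hnorm, F] using hc

lemma exists_tendsto_hpSemi_of_cauchy {u : ℕ → DSeq} (hu : ∀ i, u i ∈ hahnP)
    (hc : ∀ ε > (0 : ℝ), ∃ N : ℕ, ∀ i ≥ N, ∀ j ≥ N, hpSemi (u i - u j) < ε) :
    ∃ x ∈ hahnP, Tendsto (fun i => hpSemi (u i - x)) atTop (𝓝 0) := by
  have hsemi {x y : DSeq} (hx : x ∈ hahnP) (hy : y ∈ hahnP) :
      hpSemi (x - y) = ∑' p, ‖weightedDiff x p - weightedDiff y p‖ := by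
    rw [hpSemi_eq_hNorm (hahnP.sub_mem hx hy).2, hNorm_eq_tsum, map_sub]
    rfl
  obtain ⟨g, hg, hlim⟩ := exists_summable_tendsto_tsum_norm_sub
    (fun i => summable_norm_iff.2 (((hahnSummable_iff _).1 (hu i).1)))
    (by simpa only [hsemi (hu _) (hu _)] using hc)
  let w (p : ℕ × ℕ) : ℂ := (((p.1 + 1) * (p.2 + 1) : ℕ) : ℂ)
  have hw (p : ℕ × ℕ) : 1 ≤ ‖w p‖ := by
    rw [Complex.norm_natCast]
    exact_mod_cast Nat.one_le_iff_ne_zero.2 (by positivity)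
  let a (p : ℕ × ℕ) : ℂ := g p / w p
  have ha : Summable (‖a ·‖) :=
    hg.of_nonneg_of_le (fun _ => norm_nonneg _) fun p => by
      rw [norm_div]; exact div_le_self (norm_nonneg _) (hw p)
  set x := tailSum a
  have hx : weightedDiff x = g := by
    ext p
    simp only [weightedDiff, LinearMap.coe_mk, AddHom.coe_mk, x, dDiff_tailSum ha.of_norm]
    exact mul_div_cancel₀ _ (norm_pos_iff.1 (one_pos.trans_le (hw p)))
  have hxmem : x ∈ hahnP :=
    ⟨(hahnSummable_iff x).2 (hx ▸ hg.of_norm), pConv_iff_tendsto.2 (tendsto_tailSum ha)⟩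
  exact ⟨x, hxmem, by simpa only [hsemi (hu _) hxmem, hx] using hlim⟩

/-- on `H_p` the expression `Σ kl|Δx| + lim_N sup_{k,l≥N}|x_{k,l}|` is a
well-defined finite seminorm (the limit exists and is finite), and `H_p` is complete
with respect to this seminorm. -/
theorem statement_2 :
    (∀ x ∈ Hahn Theta.p, ∃ L : NNReal, Tendsto (supTail x) atTop (nhds (L : ENNReal))) ∧
    (∀ x ∈ Hahn Theta.p, 0 ≤ hpSemi x) ∧
    (∀ (c : ℂ), ∀ x ∈ Hahn Theta.p, hpSemi (c • x) = ‖c‖ * hpSemi x) ∧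
    (∀ x ∈ Hahn Theta.p, ∀ y ∈ Hahn Theta.p, hpSemi (x + y) ≤ hpSemi x + hpSemi y) ∧
    (∀ u : ℕ → DSeq, (∀ i, u i ∈ Hahn Theta.p) →
      (∀ ε > (0 : ℝ), ∃ N : ℕ, ∀ i ≥ N, ∀ j ≥ N, hpSemi (u i - u j) < ε) →
      ∃ x ∈ Hahn Theta.p, Tendsto (fun i => hpSemi (u i - x)) atTop (nhds 0)) := by
  refine ⟨fun x hx => ⟨0, by simpa using supTail_tendsto_zero hx.2⟩,
    fun x _ => hpSemi_nonneg x, fun c x hx => ?_, fun x hx y hy => ?_,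
    fun u hu hc => exists_tendsto_hpSemi_of_cauchy hu hc⟩
  · rw [hpSemi_eq_hNorm (hahnP.smul_mem c hx).2, hpSemi_eq_hNorm hx.2, hNorm_smul]
  · rw [hpSemi_eq_hNorm (hahnP.add_mem hx hy).2, hpSemi_eq_hNorm hx.2, hpSemi_eq_hNorm hy.2]
    exact hNorm_add_le hx.1 hy.1
end
end

section
/- For every ϑ ∈ {p, bp, r}, the inclusion H_ϑ ⊆ BV_{ϑ0} holds and is strict: every x ∈ H_ϑ lies in BV ∩ C_{ϑ0}, while the double sequence x defined by x_{1,l} = 1/l for all l ≥ 1 and x_{k,l} = 0 for all k ≥ 2 belongs to BV_{ϑ0} but not to H_ϑ. -/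
open Filter Topology

noncomputable section

/-- The double sequence with first row `1/l` and all other rows `0`. -/
def xFive : DSeq := fun k l => if k = 0 then 1 / ((l : ℂ) + 1) else 0

/-! Since every weight `(k+1)(l+1)` is at least `1`, Hahn summability dominates bounded variation.
For `xFive`, `Δ` vanishes off the first row and equals `1/(l+1) - 1/(l+2) = 1/((l+1)(l+2))` on it,
so `Σ |Δx|` converges while the weighted series `Σ (l+1)|Δx_{0,l}| = Σ 1/(l+2)` is harmonic. -/

theorem HahnSummable.mem_BVset {x : DSeq} (hx : HahnSummable x) : x ∈ BVset := by
  refine Summable.of_nonneg_of_le (fun _ => norm_nonneg _) (fun kl => ?_) hx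
  have hweight : (1 : ℝ) ≤ (((kl.1 + 1) * (kl.2 + 1) : ℕ) : ℝ) := by
    exact_mod_cast Nat.one_le_iff_ne_zero.mpr (by positivity)
  exact le_mul_of_one_le_left (norm_nonneg _) hweight

theorem summable_prod_iff_summable_row_zero {α : Type*} [AddCommMonoid α] [TopologicalSpace α]
    {f : ℕ × ℕ → α} (hf : ∀ k l, k ≠ 0 → f (k, l) = 0) :
    Summable f ↔ Summable fun l => f (0, l) := by
  refine ((Prod.mk_right_injective 0).summable_iff ?_).symm
  rintro ⟨k, l⟩ hkl
  exact hf k l fun hk => hkl ⟨l, by rw [hk]⟩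

theorem thConv_of_rConv_of_dBounded {x : DSeq} {L : ℂ} (hr : RConv x L) (hb : DBounded x)
    (θ : Theta) : ThConv θ x L := by
  cases θ
  exacts [hr.1, ⟨hr.1, hb⟩, hr]

theorem xFive_succ (k l : ℕ) : xFive (k + 1) l = 0 := rfl

theorem dDiff_xFive_zero (l : ℕ) : dDiff xFive 0 l = 1 / (((l : ℂ) + 1) * ((l : ℂ) + 2)) := by
  have h1 : (l : ℂ) + 1 ≠ 0 := by exact_mod_cast Nat.succ_ne_zero l
  have h2 : (l : ℂ) + 2 ≠ 0 := by exact_mod_cast Nat.succ_ne_zero (l + 1)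
  simp only [dDiff, xFive, if_pos, Nat.succ_ne_zero, if_false]
  push_cast
  rw [add_assoc, one_add_one_eq_two]
  field_simp
  ring

theorem dDiff_xFive_succ (k l : ℕ) : dDiff xFive (k + 1) l = 0 := by
  simp only [dDiff, xFive_succ]
  ring

theorem norm_dDiff_xFive_zero (l : ℕ) :
    ‖dDiff xFive 0 l‖ = 1 / (((l : ℝ) + 1) * ((l : ℝ) + 2)) := by
  rw [dDiff_xFive_zero, ← Complex.ofReal_natCast, norm_div, norm_one, norm_mul]
  simp only [← Complex.ofReal_one, ← Complex.ofReal_ofNat, ← Complex.ofReal_add,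
    Complex.norm_real, Real.norm_of_nonneg (by positivity : (0 : ℝ) ≤ (l : ℝ) + 1),
    Real.norm_of_nonneg (by positivity : (0 : ℝ) ≤ (l : ℝ) + 2)]

theorem summable_one_div_succ_mul_succ_succ :
    Summable fun l : ℕ => 1 / (((l : ℝ) + 1) * ((l : ℝ) + 2)) := by
  have hsq : Summable fun l : ℕ => 1 / ((l : ℝ) + 1) ^ 2 := by
    simpa using (summable_nat_add_iff 1).mpr (Real.summable_one_div_nat_pow.mpr one_lt_two)
  refine Summable.of_nonneg_of_le (fun l => by positivity) (fun l => ?_) hsq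
  gcongr
  linarith

theorem not_summable_one_div_add_two : ¬ Summable fun l : ℕ => 1 / ((l : ℝ) + 2) := by
  intro h
  refine Real.not_summable_one_div_natCast ((summable_nat_add_iff 2).mp ?_)
  simpa using h

theorem xFive_mem_BVset : xFive ∈ BVset := by
  refine (summable_prod_iff_summable_row_zero ?_).mpr ?_
  · rintro (_ | k) l hk
    · exact absurd rfl hk
    · simp only [dDiff_xFive_succ, norm_zero]
  · simpa only [norm_dDiff_xFive_zero] using summable_one_div_succ_mul_succ_succ

theorem not_hahnSummable_xFive : ¬ HahnSummable xFive := by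
  intro h
  apply not_summable_one_div_add_two
  refine (h.comp_injective (Prod.mk_right_injective 0)).congr fun l => ?_
  have hl : (l : ℝ) + 1 ≠ 0 := by positivity
  simp only [Function.comp_apply, norm_dDiff_xFive_zero]
  push_cast
  field_simp

theorem dBounded_xFive : DBounded xFive := by
  refine ⟨1, fun k l => ?_⟩
  rcases k with _ | k
  · simp only [xFive, if_true, norm_div, norm_one]
    rw [← Nat.cast_succ, Complex.norm_natCast]
    exact div_le_one_of_le₀ (by exact_mod_cast Nat.succ_pos l) (by positivity)
  · simp [xFive_succ]

theorem rConv_xFive : RConv xFive 0 := by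
  refine ⟨fun ε hε => ⟨1, fun k hk l _ => ?_⟩, fun k => ⟨0, ?_⟩, fun l => ⟨0, ?_⟩⟩
  · obtain ⟨k, rfl⟩ := Nat.exists_eq_add_of_le' hk
    simpa [xFive_succ] using hε
  · rcases k with _ | k
    · simpa [xFive] using tendsto_one_div_add_atTop_nhds_zero_nat (𝕜 := ℂ)
    · simpa only [xFive_succ] using tendsto_const_nhds
  · exact (tendsto_add_atTop_iff_nat 1).mp (by simpa only [xFive_succ] using tendsto_const_nhds)

/-- `H_ϑ ⊆ BV_{ϑ0}` strictly; the sequence `x_{1,l} = 1/l`, `x_{k,l} = 0`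
for `k ≥ 2` lies in `BV_{ϑ0} \ H_ϑ`. -/
theorem statement_5 (θ : Theta) :
    Hahn θ ⊆ (BVset ∩ {x | ThConv θ x 0}) ∧
    xFive ∈ BVset ∧ ThConv θ xFive 0 ∧ xFive ∉ Hahn θ :=
  ⟨fun _ hx => ⟨hx.1.mem_BVset, hx.2⟩, xFive_mem_BVset,
    thConv_of_rConv_of_dBounded rConv_xFive dBounded_xFive θ,
    fun hx => not_hahnSummable_xFive hx.1⟩
end
end

section
/- For every ϑ ∈ {p, bp, r}, neither of the spaces H_ϑ and L_u contains the other: there exists a double sequence belonging to L_u but not to H_ϑ (for instance x with x_{k,k} = 1/k² on the diagonal and 0 elsewhere), and there exists a double sequence belonging to H_ϑ but not to L_u (for instance x with x_{1,l} = 1 for all l and x_{k,l} = 0 for k ≥ 2). -/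
open Filter Topology

noncomputable section

/-- The diagonal double sequence `x_{k,k} = 1/k²`, `0` elsewhere. -/
def xDiag : DSeq := fun k l => if k = l then 1 / (((k : ℂ) + 1) ^ 2) else 0

/-- The double sequence with first row `1` and all other rows `0`. -/
def xRow : DSeq := fun k _ => if k = 0 then 1 else 0

/-! Neither inclusion holds because the two spaces weigh opposite ends of the sequence. On the
diagonal `x_{k,k} = 1/k²` the entries are summable, yet each `Δx_{k,k}` is at least `1/k²`, so
the Hahn weight `kl = k²` makes every diagonal term of `Σ kl |Δx_{k,l}|` at least `1`. The first
row of ones is not summable, but its double differences all vanish and it is `0` from the second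
row on, so it lies in `H_ϑ` for every `ϑ`. -/

open Function

theorem summable_iff_diag_of_offDiag_eq_zero {α M : Type*} [AddCommMonoid M] [TopologicalSpace M]
    {f : α × α → M} (hf : ∀ a b, a ≠ b → f (a, b) = 0) :
    Summable f ↔ Summable fun a => f (a, a) :=
  (diag_injective.summable_iff fun ⟨a, b⟩ hab =>
    hf a b fun h => hab ⟨a, by rw [h]; rfl⟩).symm

theorem not_summable_of_one_le_comp_injective {α : Type*} {f : α → ℝ} {g : ℕ → α}
    (hg : Injective g) (hfg : ∀ n, 1 ≤ f (g n)) : ¬ Summable f := fun hf =>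
  absurd (ge_of_tendsto' (hf.comp_injective hg).tendsto_atTop_zero hfg) (by norm_num)

theorem norm_xDiag_diag (k : ℕ) : ‖xDiag k k‖ = 1 / ((k : ℝ) + 1) ^ 2 := by
  simp only [xDiag, if_true, norm_div, norm_one, norm_pow]
  norm_cast

theorem xDiag_mem_Lu : xDiag ∈ Lu := by
  refine (summable_iff_diag_of_offDiag_eq_zero (f := fun kl => ‖xDiag kl.1 kl.2‖)
    fun k l hkl => by simp [xDiag, hkl]).2 ?_
  simp only [norm_xDiag_diag]
  exact_mod_cast (summable_nat_add_iff 1).mpr (Real.summable_one_div_nat_pow.mpr one_lt_two)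

theorem dDiff_xDiag_diag (k : ℕ) :
    dDiff xDiag k k = ((1 / ((k : ℝ) + 1) ^ 2 + 1 / ((k : ℝ) + 2) ^ 2 : ℝ) : ℂ) := by
  simp only [dDiff, xDiag, if_true, if_neg (Nat.succ_ne_self k), if_neg (Nat.succ_ne_self k).symm]
  push_cast
  ring

theorem one_le_hahnWeight_mul_norm_dDiff_xDiag (k : ℕ) :
    1 ≤ (((k + 1) * (k + 1) : ℕ) : ℝ) * ‖dDiff xDiag k k‖ := by
  have hk : ((k : ℝ) + 1) ^ 2 ≠ 0 := by positivity
  rw [dDiff_xDiag_diag, Complex.norm_real, Real.norm_of_nonneg (by positivity)]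
  calc (1 : ℝ) = (((k + 1) * (k + 1) : ℕ) : ℝ) * (1 / ((k : ℝ) + 1) ^ 2) := by
        push_cast; field_simp
    _ ≤ _ := by gcongr; exact le_add_of_nonneg_right (by positivity)

theorem xDiag_not_hahnSummable : ¬ HahnSummable xDiag :=
  not_summable_of_one_le_comp_injective diag_injective one_le_hahnWeight_mul_norm_dDiff_xDiag

theorem xDiag_not_mem_Hahn (θ : Theta) : xDiag ∉ Hahn θ :=
  fun h => xDiag_not_hahnSummable h.1

theorem dDiff_xRow (k l : ℕ) : dDiff xRow k l = 0 := by
  simp [dDiff, xRow]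

theorem xRow_hahnSummable : HahnSummable xRow := by
  simp only [HahnSummable, dDiff_xRow, norm_zero, mul_zero]
  exact summable_zero

theorem xRow_apply_of_ne_zero {k : ℕ} (hk : k ≠ 0) (l : ℕ) : xRow k l = 0 :=
  if_neg hk

theorem pConv_xRow : PConv xRow 0 := fun ε hε =>
  ⟨1, fun k hk l _ => by simpa [xRow_apply_of_ne_zero (Nat.one_le_iff_ne_zero.mp hk)] using hε⟩

theorem dBounded_xRow : DBounded xRow :=
  ⟨1, fun k l => by by_cases hk : k = 0 <;> simp [xRow, hk]⟩

theorem rConv_xRow : RConv xRow 0 :=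
  ⟨pConv_xRow, fun k => ⟨xRow k 0, tendsto_const_nhds⟩, fun l => ⟨0,
    tendsto_const_nhds.congr' <| (eventually_ne_atTop 0).mono fun _ hk =>
      (xRow_apply_of_ne_zero hk l).symm⟩⟩

theorem thConv_xRow : ∀ θ : Theta, ThConv θ xRow 0
  | .p => pConv_xRow
  | .bp => ⟨pConv_xRow, dBounded_xRow⟩
  | .r => rConv_xRow

theorem xRow_mem_Hahn (θ : Theta) : xRow ∈ Hahn θ :=
  ⟨xRow_hahnSummable, thConv_xRow θ⟩

theorem xRow_not_mem_Lu : xRow ∉ Lu :=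
  not_summable_of_one_le_comp_injective (g := fun l => (0, l)) (Prod.mk_right_injective 0)
    fun l => by simp [xRow]

/-- neither of `H_ϑ` and `L_u` includes the other. -/
theorem statement_6 (θ : Theta) :
    xDiag ∈ Lu ∧ xDiag ∉ Hahn θ ∧ xRow ∈ Hahn θ ∧ xRow ∉ Lu :=
  ⟨xDiag_mem_Lu, xDiag_not_mem_Hahn θ, xRow_mem_Hahn θ, xRow_not_mem_Lu⟩
end
end

section
/- For every ϑ ∈ {p, bp, r}, the inclusion ∫L_u ⊆ H_ϑ holds and is strict: every x with Σ_{k,l=1}^∞ kl|x_{k,l}| < ∞ satisfies Σ_{k,l=1}^∞ kl|Δx_{k,l}| ≤ 4 Σ_{k,l=1}^∞ kl|x_{k,l}| < ∞ and lies in C_{ϑ0}, while the double sequence x_{k,l} = 1/(kl)² belongs to H_ϑ but not to ∫L_u. -/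
open Filter Topology

noncomputable section

/-- The double sequence `x_{k,l} = 1/(kl)²`. -/
def xSq : DSeq := fun k l => 1 / ((((k : ℂ) + 1) * ((l : ℂ) + 1)) ^ 2)

/-!
`Δx_{k,l}` is a signed sum of the values of `x` at the four corners of the unit square at
`(k, l)`, and the weight `kl` increases in both indices, so each of the four shifted weighted
sums is at most `Σ kl |x_{k,l}|`; this gives the factor `4`. Absolute summability already forces
`ϑ`-convergence to `0`. For the counterexample write `x_{k,l} = u_k u_l` with `u_k = 1/k²`:
then `Δx_{k,l} = (u_k - u_{k+1})(u_l - u_{l+1})` and `k (u_k - u_{k+1}) ≤ 2/k²` is summable,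
whereas `kl x_{k,l} = 1/(kl)` is not.
-/

/-- The paper's `kl |x_{k,l}|`; `x ∈ intLu`, `HahnSummable x` and `hNorm x` unfold to statements
about `weightedNorm x` and `weightedNorm (dDiff x)`. -/
def weightedNorm (x : DSeq) (kl : ℕ × ℕ) : ℝ :=
  (((kl.1 + 1) * (kl.2 + 1) : ℕ) : ℝ) * ‖x kl.1 kl.2‖

lemma weightedNorm_nonneg (x : DSeq) (kl : ℕ × ℕ) : 0 ≤ weightedNorm x kl := by
  unfold weightedNorm; positivity

lemma norm_le_weightedNorm (x : DSeq) (kl : ℕ × ℕ) : ‖x kl.1 kl.2‖ ≤ weightedNorm x kl :=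
  le_mul_of_one_le_left (norm_nonneg _) (mod_cast Nat.one_le_iff_ne_zero.2 (by positivity))

lemma intLu_subset_Lu : intLu ⊆ Lu := fun _ hx =>
  .of_nonneg_of_le (fun _ => norm_nonneg _) (norm_le_weightedNorm _) hx

lemma pConv_of_tendsto {x : DSeq} {L : ℂ}
    (h : Tendsto (fun kl : ℕ × ℕ => x kl.1 kl.2) atTop (𝓝 L)) : PConv x L := by
  intro ε hε
  obtain ⟨N, hN⟩ := Metric.tendsto_atTop.1 h ε hε
  exact ⟨max N.1 N.2, fun k hk l hl =>
    dist_eq_norm (x k l) L ▸ hN (k, l) ⟨le_of_max_le_left hk, le_of_max_le_right hl⟩⟩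

lemma thConv_zero_of_mem_Lu (θ : Theta) {x : DSeq} (hx : x ∈ Lu) : ThConv θ x 0 := by
  have hx' : Summable fun kl : ℕ × ℕ => ‖x kl.1 kl.2‖ := hx
  have hp : PConv x 0 := pConv_of_tendsto <| tendsto_zero_iff_norm_tendsto_zero.2 <|
    hx'.tendsto_cofinite_zero.mono_left atTop_le_cofinite
  cases θ with
  | p => exact hp
  | bp => exact ⟨hp, _, fun k l => hx'.le_tsum (k, l) fun _ _ => norm_nonneg _⟩
  | r =>
    refine ⟨hp, fun k => ⟨0, ?_⟩, fun l => ⟨0, ?_⟩⟩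
    · exact tendsto_zero_iff_norm_tendsto_zero.2 (hx'.prod_factor k).tendsto_atTop_zero
    · exact tendsto_zero_iff_norm_tendsto_zero.2 (hx'.prod_symm.prod_factor l).tendsto_atTop_zero

def dShift (x : DSeq) (a b : ℕ) : DSeq := fun k l => x (k + a) (l + b)

lemma weightedNorm_dShift_le (x : DSeq) (a b : ℕ) (kl : ℕ × ℕ) :
    weightedNorm (dShift x a b) kl ≤ weightedNorm x (kl.1 + a, kl.2 + b) := by
  unfold weightedNorm dShift
  gcongr <;> simp

lemma summable_weightedNorm_dShift {x : DSeq} (hx : Summable (weightedNorm x)) (a b : ℕ) :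
    Summable (weightedNorm (dShift x a b)) :=
  .of_nonneg_of_le (weightedNorm_nonneg _) (weightedNorm_dShift_le x a b)
    (hx.comp_injective ((add_left_injective a).prodMap (add_left_injective b)))

lemma tsum_weightedNorm_dShift_le {x : DSeq} (hx : Summable (weightedNorm x)) (a b : ℕ) :
    ∑' kl, weightedNorm (dShift x a b) kl ≤ ∑' kl, weightedNorm x kl :=
  (summable_weightedNorm_dShift hx a b).tsum_le_tsum_of_inj _
    ((add_left_injective a).prodMap (add_left_injective b))
    (fun _ _ => weightedNorm_nonneg _ _) (weightedNorm_dShift_le x a b) hx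

lemma norm_dDiff_le (x : DSeq) (k l : ℕ) :
    ‖dDiff x k l‖ ≤ ‖x k l‖ + ‖x (k + 1) l‖ + ‖x k (l + 1)‖ + ‖x (k + 1) (l + 1)‖ :=
  (norm_add_le _ _).trans <| add_le_add_left
    ((norm_sub_le _ _).trans (add_le_add_left (norm_sub_le _ _) _)) _

lemma weightedNorm_dDiff_le (x : DSeq) (kl : ℕ × ℕ) :
    weightedNorm (dDiff x) kl ≤ weightedNorm x kl + weightedNorm (dShift x 1 0) kl +
      weightedNorm (dShift x 0 1) kl + weightedNorm (dShift x 1 1) kl := by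
  simp only [weightedNorm, dShift, Nat.add_zero, ← mul_add]
  exact mul_le_mul_of_nonneg_left (norm_dDiff_le x _ _) (Nat.cast_nonneg _)

lemma hahnSummable_of_mem_intLu {x : DSeq} (hx : x ∈ intLu) : HahnSummable x :=
  .of_nonneg_of_le (weightedNorm_nonneg _) (weightedNorm_dDiff_le x) <|
    ((hx.add (summable_weightedNorm_dShift hx 1 0)).add
      (summable_weightedNorm_dShift hx 0 1)).add (summable_weightedNorm_dShift hx 1 1)

lemma hNorm_le_four_mul {x : DSeq} (hx : x ∈ intLu) :
    hNorm x ≤ 4 * ∑' kl, weightedNorm x kl := by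
  have h00 : Summable (weightedNorm x) := hx
  have h10 := summable_weightedNorm_dShift hx 1 0
  have h01 := summable_weightedNorm_dShift hx 0 1
  have h11 := summable_weightedNorm_dShift hx 1 1
  calc hNorm x ≤ ∑' kl, (weightedNorm x kl + weightedNorm (dShift x 1 0) kl +
        weightedNorm (dShift x 0 1) kl + weightedNorm (dShift x 1 1) kl) :=
        (hahnSummable_of_mem_intLu hx).tsum_le_tsum (weightedNorm_dDiff_le x)
          (((h00.add h10).add h01).add h11)
    _ = ∑' kl, weightedNorm x kl + ∑' kl, weightedNorm (dShift x 1 0) kl +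
        ∑' kl, weightedNorm (dShift x 0 1) kl + ∑' kl, weightedNorm (dShift x 1 1) kl := by
      rw [((h00.add h10).add h01).tsum_add h11, (h00.add h10).tsum_add h01, h00.tsum_add h10]
    _ ≤ 4 * ∑' kl, weightedNorm x kl := by
      linarith [tsum_weightedNorm_dShift_le h00 1 0, tsum_weightedNorm_dShift_le h00 0 1,
        tsum_weightedNorm_dShift_le h00 1 1]

lemma dDiff_mul (u v : ℕ → ℂ) (k l : ℕ) :
    dDiff (fun k l => u k * v l) k l = (u k - u (k + 1)) * (v l - v (l + 1)) := by
  simp only [dDiff]; ring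

lemma mul_mem_Lu {u v : ℕ → ℂ} (hu : Summable fun k => ‖u k‖) (hv : Summable fun l => ‖v l‖) :
    (fun k l => u k * v l) ∈ Lu :=
  hu.mul_norm hv

lemma hahnSummable_mul {u v : ℕ → ℂ}
    (hu : Summable fun k : ℕ => ((k : ℝ) + 1) * ‖u k - u (k + 1)‖)
    (hv : Summable fun l : ℕ => ((l : ℝ) + 1) * ‖v l - v (l + 1)‖) :
    HahnSummable fun k l => u k * v l := by
  refine (hu.mul_of_nonneg hv (fun _ => by positivity) (fun _ => by positivity)).congr
    fun kl => ?_
  simp only [dDiff_mul, norm_mul]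
  push_cast
  ring

def invSq (k : ℕ) : ℂ := 1 / ((k : ℂ) + 1) ^ 2

lemma xSq_eq_mul : xSq = fun k l => invSq k * invSq l := by
  ext k l
  simp only [xSq, invSq, mul_pow, one_div, mul_inv]

lemma norm_invSq (k : ℕ) : ‖invSq k‖ = 1 / ((k : ℝ) + 1) ^ 2 := by
  rw [invSq, norm_div, norm_pow, norm_one, ← Nat.cast_succ, Complex.norm_natCast, Nat.cast_succ]

lemma invSq_sub_succ (k : ℕ) :
    invSq k - invSq (k + 1) = ((2 * k + 3 : ℝ) / (((k : ℝ) + 1) ^ 2 * ((k : ℝ) + 2) ^ 2) : ℝ) := by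
  have h1 : (k : ℂ) + 1 ≠ 0 := by exact_mod_cast k.succ_ne_zero
  have h2 : (k : ℂ) + 2 ≠ 0 := by exact_mod_cast (k + 1).succ_ne_zero
  rw [invSq, invSq, Nat.cast_succ, add_assoc, one_add_one_eq_two]
  push_cast
  field_simp
  ring

lemma summable_norm_invSq : Summable fun k => ‖invSq k‖ := by
  simpa [norm_invSq] using (summable_nat_add_iff 1).2 (Real.summable_one_div_nat_pow.2 one_lt_two)

lemma mul_norm_invSq_sub_succ_le (k : ℕ) :
    ((k : ℝ) + 1) * ‖invSq k - invSq (k + 1)‖ ≤ 2 * ‖invSq k‖ := by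
  rw [invSq_sub_succ, Complex.norm_real, Real.norm_of_nonneg (by positivity), norm_invSq,
    mul_div_assoc', div_le_iff₀ (by positivity)]
  field_simp
  nlinarith

lemma xSq_mem_Lu : xSq ∈ Lu :=
  xSq_eq_mul ▸ mul_mem_Lu summable_norm_invSq summable_norm_invSq

lemma xSq_hahnSummable : HahnSummable xSq := by
  have h : Summable fun k : ℕ => ((k : ℝ) + 1) * ‖invSq k - invSq (k + 1)‖ :=
    .of_nonneg_of_le (fun _ => by positivity) mul_norm_invSq_sub_succ_le
      (summable_norm_invSq.mul_left 2)
  exact xSq_eq_mul ▸ hahnSummable_mul h h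

lemma weightedNorm_xSq_zero (l : ℕ) : weightedNorm xSq (0, l) = 1 / ((l : ℝ) + 1) := by
  rw [weightedNorm, xSq_eq_mul]
  simp only [norm_mul, norm_invSq]
  push_cast
  field_simp
  norm_num

lemma xSq_notMem_intLu : xSq ∉ intLu := fun h =>
  have hharmonic : ¬Summable fun l : ℕ => 1 / ((l : ℝ) + 1) := by
    simpa using mt (summable_nat_add_iff 1).1 Real.not_summable_one_div_natCast
  hharmonic ((h.prod_factor 0).congr weightedNorm_xSq_zero)

/-- `∫L_u ⊆ H_ϑ` strictly, with the quantitative bound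
`Σ kl|Δx| ≤ 4 Σ kl|x|`; the sequence `1/(kl)²` lies in `H_ϑ \ ∫L_u`. -/
theorem statement_7 (θ : Theta) :
    (∀ x ∈ intLu, x ∈ Hahn θ ∧
      hNorm x ≤ 4 * ∑' kl : ℕ × ℕ,
        (((kl.1 + 1) * (kl.2 + 1) : ℕ) : ℝ) * ‖x kl.1 kl.2‖) ∧
    xSq ∈ Hahn θ ∧ xSq ∉ intLu :=
  ⟨fun _ hx => ⟨⟨hahnSummable_of_mem_intLu hx, thConv_zero_of_mem_Lu θ (intLu_subset_Lu hx)⟩,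
      hNorm_le_four_mul hx⟩,
    ⟨xSq_hahnSummable, thConv_zero_of_mem_Lu θ xSq_mem_Lu⟩, xSq_notMem_intLu⟩
end
end

section
/- For every ϑ ∈ {p, bp, r}, the set E = {d^{(k,l)} : k,l ≥ 1} is a determining set for H_ϑ, where d^{(k,l)} ∈ Ω is defined by d^{(k,l)}_{i,j} = 1/(kl) for 1 ≤ i ≤ k and 1 ≤ j ≤ l, and d^{(k,l)}_{i,j} = 0 otherwise. Precisely: a finitely supported double sequence x satisfies ‖x‖_H = Σ_{k,l} kl|Δx_{k,l}| ≤ 1 if and only if x belongs to the absolutely convex hull of E, i.e., x = Σ_{k≤m, l≤n} z_{k,l} d^{(k,l)} for some m,n and complex coefficients z_{k,l} with Σ_{k≤m, l≤n} |z_{k,l}| ≤ 1. -/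
open Filter Topology

noncomputable section

/-!
Since `Δ d^{(k,l)}` is the unit mass at `(k,l)` divided by `kl`, the operator `Δ` sends
`Σ z_{k,l} d^{(k,l)}` to `z_{k,l}/(kl)`, so the `H`-norm of such a combination is exactly
`Σ |z_{k,l}|`. Conversely, a finitely supported `x` is recovered from `Δx` by double telescoping,
`x_{i,j} = Σ_{k ≥ i, l ≥ j} Δx_{k,l}`, i.e. `x = Σ kl Δx_{k,l} d^{(k,l)}`.
-/

open Finset

lemma sum_Ico_sub_succ_of_eq_zero {G : Type*} [AddCommGroup G] {f : ℕ → G} {M : ℕ}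
    (hf : ∀ k, M ≤ k → f k = 0) (i : ℕ) :
    ∑ k ∈ Ico i M, (f k - f (k + 1)) = f i := by
  rcases le_or_gt i M with hiM | hMi
  · rw [← neg_inj, ← sum_neg_distrib]
    simp only [neg_sub]
    rw [sum_Ico_sub f hiM, hf M le_rfl, zero_sub]
  · rw [Ico_eq_empty_of_le hMi.le, sum_empty, hf i hMi.le]

lemma eq_sum_Ico_dDiff {x : DSeq} {M : ℕ} (hM : ∀ k l, M ≤ k ∨ M ≤ l → x k l = 0)
    (i j : ℕ) :
    x i j = ∑ k ∈ Ico i M, ∑ l ∈ Ico j M, dDiff x k l := by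
  have hcol : ∀ k, ∑ l ∈ Ico j M, dDiff x k l = x k j - x (k + 1) j := fun k => by
    rw [← sum_Ico_sub_succ_of_eq_zero (M := M) (f := fun l => x k l - x (k + 1) l)
      (fun l hl => by rw [hM k l (Or.inr hl), hM (k + 1) l (Or.inr hl), sub_zero]) j]
    exact sum_congr rfl fun l _ => by simp only [dDiff]; ring
  simp only [hcol]
  exact (sum_Ico_sub_succ_of_eq_zero (fun k hk => hM k j (Or.inl hk)) i).symm

lemma eq_sum_smul_dkl {x : DSeq} {M : ℕ} (hM : ∀ k l, M ≤ k ∨ M ≤ l → x k l = 0) :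
    x = ∑ k ∈ range M, ∑ l ∈ range M,
      ((((k + 1) * (l + 1) : ℕ) : ℂ) * dDiff x k l) • dkl k l := by
  funext i j
  have hcoef : ∀ k l, (((((k + 1) * (l + 1) : ℕ) : ℂ) * dDiff x k l) • dkl k l) i j =
      if i ≤ k then if j ≤ l then dDiff x k l else 0 else 0 := by
    intro k l
    have hkl : ((k : ℂ) + 1) * ((l : ℂ) + 1) ≠ 0 :=
      mul_ne_zero (Nat.cast_add_one_ne_zero k) (Nat.cast_add_one_ne_zero l)
    by_cases hi : i ≤ k <;> by_cases hj : j ≤ l <;> simp [dkl, hi, hj]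
    field_simp
  have hfilter : ∀ a, {b ∈ range M | a ≤ b} = Ico a M := fun a => by
    rw [range_eq_Ico, Ico_filter_le, max_eq_right (Nat.zero_le a)]
  conv_lhs => rw [eq_sum_Ico_dDiff hM i j]
  simp only [Finset.sum_apply, hcoef, ← hfilter, sum_filter]
  refine sum_congr rfl fun k _ => ?_
  split_ifs <;> simp

lemma dDiff_dkl (k l i j : ℕ) :
    dDiff (dkl k l) i j =
      if i = k ∧ j = l then 1 / (((k : ℂ) + 1) * ((l : ℂ) + 1)) else 0 := by
  unfold dDiff dkl
  split_ifs <;> (try (exfalso; omega)) <;> ring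

lemma dDiff_sum_smul {ι κ : Type*} (s : Finset ι) (t : Finset κ) (z : ι → κ → ℂ)
    (y : ι → κ → DSeq) (i j : ℕ) :
    dDiff (∑ a ∈ s, ∑ b ∈ t, z a b • y a b) i j =
      ∑ a ∈ s, ∑ b ∈ t, z a b * dDiff (y a b) i j := by
  simp only [dDiff, Finset.sum_apply, Pi.smul_apply, smul_eq_mul, mul_add, mul_sub,
    ← sum_sub_distrib, ← sum_add_distrib]

lemma dDiff_sum_smul_dkl (m n : ℕ) (z : ℕ → ℕ → ℂ) (i j : ℕ) :
    dDiff (∑ k ∈ range m, ∑ l ∈ range n, z k l • dkl k l) i j =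
      if i < m ∧ j < n then z i j / (((i : ℂ) + 1) * ((j : ℂ) + 1)) else 0 := by
  simp only [dDiff_sum_smul, dDiff_dkl, mul_ite, mul_zero, mul_one_div, ite_and, sum_ite_irrel,
    sum_const_zero, sum_ite_eq, mem_range]

lemma hNorm_sum_smul_dkl (m n : ℕ) (z : ℕ → ℕ → ℂ) :
    hNorm (∑ k ∈ range m, ∑ l ∈ range n, z k l • dkl k l) =
      ∑ k ∈ range m, ∑ l ∈ range n, ‖z k l‖ := by
  have hterm : ∀ k l, (((k + 1) * (l + 1) : ℕ) : ℝ) *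
      ‖dDiff (∑ k ∈ range m, ∑ l ∈ range n, z k l • dkl k l) k l‖ =
      if k < m ∧ l < n then ‖z k l‖ else 0 := by
    intro k l
    have hnorm : ∀ a : ℕ, ‖(a : ℂ) + 1‖ = a + 1 := fun a => by
      exact_mod_cast Complex.norm_natCast (a + 1)
    rw [dDiff_sum_smul_dkl]
    split_ifs with h
    · rw [norm_div, norm_mul, hnorm, hnorm]
      push_cast
      field_simp
    · simp
  rw [hNorm, tsum_eq_sum (s := range m ×ˢ range n), sum_product]
  · exact sum_congr rfl fun k hk => sum_congr rfl fun l hl => by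
      rw [hterm, if_pos ⟨mem_range.1 hk, mem_range.1 hl⟩]
  · intro kl hkl
    rw [hterm, if_neg (by simpa using hkl)]

theorem statement_16_general (x : DSeq) (hx : FinSupp x) :
    hNorm x ≤ 1 ↔
      ∃ (m n : ℕ) (z : ℕ → ℕ → ℂ),
        (∑ k ∈ Finset.range (m + 1), ∑ l ∈ Finset.range (n + 1),
          ‖z k l‖) ≤ 1 ∧
        x = ∑ k ∈ Finset.range (m + 1), ∑ l ∈ Finset.range (n + 1),
          z k l • dkl k l := by
  constructor
  · intro h
    obtain ⟨M, hM⟩ := hx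
    have hx_eq := eq_sum_smul_dkl (M := M + 1) fun k l hkl => hM k l (by omega)
    refine ⟨M, M, _, ?_, hx_eq⟩
    rwa [← hNorm_sum_smul_dkl, ← hx_eq]
  · rintro ⟨m, n, z, hz, rfl⟩
    rwa [hNorm_sum_smul_dkl]

/-- `E = {d^{(k,l)}}` is a determining set for `H_ϑ`: a finitely
supported double sequence `x` satisfies `‖x‖_H ≤ 1` iff it lies in the absolutely
convex hull of `E`. -/
theorem statement_16 (θ : Theta) (x : DSeq) (hx : FinSupp x) :
    hNorm x ≤ 1 ↔
      ∃ (m n : ℕ) (z : ℕ → ℕ → ℂ),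
        (∑ k ∈ Finset.range (m + 1), ∑ l ∈ Finset.range (n + 1),
          ‖z k l‖) ≤ 1 ∧
        x = ∑ k ∈ Finset.range (m + 1), ∑ l ∈ Finset.range (n + 1),
          z k l • dkl k l :=
  statement_16_general x hx
end
end
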